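/- arXiv:1107.1860 — 5 statements merged into one kernel-verified Lean document; each statement's English description precedes it below -/
import Mathlib

section
/- Let e_1,…,e_{2n} be a symplectic basis of (V,ω) and define ξ: V → S^2V ⊗ V by ξ(v) = (1/(2n+1)) Σ_{i=1}^n (e_i v ⊗ e_{i+n} − e_{i+n} v ⊗ e_i). Then ξ is injective, Sp(V,ω)-equivariant, independent of the choice of symplectic basis, and φ ∘ ξ = Id_V, where φ(u_1u_2 ⊗ v) = ω(u_1,v)u_2 + ω(u_2,v)u_1. -/
/-! The tensor `U = ∑ᵢ eᵢ ⊗ e_{i+n} − e_{i+n} ⊗ eᵢ ∈ V ⊗ V` is the inverse of `ω`: contracting its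
second factor with `ω(x, ·)` returns `x`. Since `ω` is nondegenerate, every functional is some
`ω(x, ·)`, so this pins `U` down independently of the symplectic basis; `ξ(v)` is `U` with `v`
multiplied into the first factor, hence basis independent as well, and it is equivariant because a
symplectic `g` maps symplectic bases to symplectic bases. The same identity gives
`φ(ξ v) = (2n v + v) / (2n + 1) = v`, and such a `φ` exists, so `ξ` has a left inverse. -/

open TensorProduct

set_option synthInstance.maxHeartbeats 1000000
set_option maxHeartbeats 1000000

noncomputable section

/-- A vector of `ℝᵐ` viewed as a degree-one element of the symmetric algebra. -/
def lin {m : ℕ} (v : Fin m → ℝ) : MvPolynomial (Fin m) ℝ :=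
  ∑ i, MvPolynomial.C (v i) * MvPolynomial.X i

/-- The decomposable symmetric tensor `u 0 ⋯ u (p-1) ∈ SᵖV`. -/
def symProd {m p : ℕ} (u : Fin p → Fin m → ℝ) : MvPolynomial (Fin m) ℝ :=
  ∏ i, lin (u i)

/-- The decomposable alternating tensor `v 0 ∧ ⋯ ∧ v (q-1) ∈ ΛᵠV`. -/
def wdg {m q : ℕ} (v : Fin q → Fin m → ℝ) : ExteriorAlgebra ℝ (Fin m → ℝ) :=
  (List.ofFn fun j => ExteriorAlgebra.ι ℝ (v j)).prod

/-- The model for `⊕_{p,q} SᵖV ⊗ ΛᵠV`. -/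
abbrev MM (m : ℕ) :=
  MvPolynomial (Fin m) ℝ ⊗[ℝ] ExteriorAlgebra ℝ (Fin m → ℝ)

/-- The decomposable element `u 0 ⋯ u (p-1) ⊗ v 0 ∧ ⋯ ∧ v (q-1)` of `SᵖV ⊗ ΛᵠV`. -/
def dec {m p q : ℕ} (u : Fin p → Fin m → ℝ) (v : Fin q → Fin m → ℝ) : MM m :=
  symProd u ⊗ₜ[ℝ] wdg v

/-- The natural action of a linear map `g : V → V` on `Sym V ⊗ Λ V`. -/
def rho {m : ℕ} (g : (Fin m → ℝ) →ₗ[ℝ] (Fin m → ℝ)) : MM m →ₗ[ℝ] MM m :=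
  TensorProduct.map
    (MvPolynomial.aeval (R := ℝ) fun i => lin (g (Pi.single i 1))).toLinearMap
    (ExteriorAlgebra.map g).toLinearMap

/-- `ξ : V → S²V ⊗ V` built from a symplectic basis `e`:
`ξ(v) = (1/(2n+1)) ∑ᵢ (eᵢ v ⊗ e_{i+n} − e_{i+n} v ⊗ eᵢ)`. -/
def xiF {n : ℕ} (e : Fin (n + n) → Fin (n + n) → ℝ) (v : Fin (n + n) → ℝ) :
    MM (n + n) :=
  (1 / (2 * (n : ℝ) + 1)) • ∑ i : Fin n,
    ((lin (e (Fin.castAdd n i)) * lin v) ⊗ₜ[ℝ]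
        ExteriorAlgebra.ι ℝ (e (Fin.natAdd n i)) -
      (lin (e (Fin.natAdd n i)) * lin v) ⊗ₜ[ℝ]
        ExteriorAlgebra.ι ℝ (e (Fin.castAdd n i)))

/-- A symplectic basis: a basis `e` with `ω(eᵢ,eⱼ)=0`, `ω(eᵢ,e_{j+n})=δᵢⱼ`,
`ω(e_{i+n},e_{j+n})=0` for `1 ≤ i,j ≤ n`. -/
def IsSymplecticBasis {n : ℕ}
    (ω : (Fin (n + n) → ℝ) →ₗ[ℝ] (Fin (n + n) → ℝ) →ₗ[ℝ] ℝ)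
    (e : Fin (n + n) → Fin (n + n) → ℝ) : Prop :=
  (∃ b : Module.Basis (Fin (n + n)) ℝ (Fin (n + n) → ℝ), ⇑b = e) ∧
  (∀ i j : Fin n, ω (e (Fin.castAdd n i)) (e (Fin.castAdd n j)) = 0) ∧
  (∀ i j : Fin n, ω (e (Fin.castAdd n i)) (e (Fin.natAdd n j)) =
    if i = j then 1 else 0) ∧
  (∀ i j : Fin n, ω (e (Fin.natAdd n i)) (e (Fin.natAdd n j)) = 0)

section Linear

variable {m : ℕ}

lemma lin_eq_linearCombination (v : Fin m → ℝ) :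
    lin v = Fintype.linearCombination ℝ MvPolynomial.X v := by
  simp [lin, Fintype.linearCombination_apply, MvPolynomial.smul_eq_C_mul]

lemma pderiv_lin (k : Fin m) (u : Fin m → ℝ) :
    MvPolynomial.pderiv k (lin u) = MvPolynomial.C (u k) := by
  classical
  simp [lin, Pi.single_apply]

lemma aeval_lin (g : (Fin m → ℝ) →ₗ[ℝ] (Fin m → ℝ)) (w : Fin m → ℝ) :
    MvPolynomial.aeval (fun i => lin (g (Pi.single i 1))) (lin w) = lin (g w) := by
  conv_rhs => rw [pi_eq_sum_univ' w, map_sum g, lin_eq_linearCombination, map_sum]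
  simp [lin_eq_linearCombination, Fintype.linearCombination_apply]

end Linear

section Contraction

open MvPolynomial

variable {m : ℕ} (ω : (Fin m → ℝ) →ₗ[ℝ] (Fin m → ℝ) →ₗ[ℝ] ℝ)

/-- The Hessian of `u₁u₂` is `u₁u₂ᵀ + u₂u₁ᵀ`, so contracting it with `ω(·, x)` gives the
paper's `φ` on `S²V ⊗ V`. -/
def hessianContraction : MM m →ₗ[ℝ] (Fin m → ℝ) :=
  TensorProduct.lift <| LinearMap.mk₂ ℝ
    (fun p x l => ∑ k, ω (fun j => if k = j then 1 else 0) (ExteriorAlgebra.ιInv x) *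
      constantCoeff (pderiv l (pderiv k p)))
    (fun p q x => by ext; simp [mul_add, Finset.sum_add_distrib])
    (fun c p x => by ext; simp [Finset.mul_sum, mul_left_comm])
    (fun p x y => by ext; simp [add_mul, Finset.sum_add_distrib])
    (fun c p x => by ext; simp [Finset.mul_sum, mul_assoc])

lemma hessianContraction_tmul (u₁ u₂ v : Fin m → ℝ) :
    hessianContraction ω ((lin u₁ * lin u₂) ⊗ₜ[ℝ] ExteriorAlgebra.ι ℝ v) =
      ω u₁ v • u₂ + ω u₂ v • u₁ := by
  ext l
  simp only [hessianContraction, lift.tmul, LinearMap.mk₂_apply, ExteriorAlgebra.ι_leftInverse v,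
    pderiv_mul, pderiv_lin, pderiv_C, map_add, map_mul, zero_mul, mul_zero,
    zero_add, add_zero]
  rw [LinearMap.pi_apply_eq_sum_univ ω u₁, LinearMap.pi_apply_eq_sum_univ ω u₂]
  simp only [constantCoeff_C, LinearMap.sum_apply, LinearMap.smul_apply, Pi.add_apply,
    Pi.smul_apply, smul_eq_mul, Finset.sum_mul, mul_add, Finset.sum_add_distrib]
  congr 1 <;> exact Finset.sum_congr rfl fun k _ => by ring

end Contraction

lemma TensorProduct.ext_of_rid_lTensor_dual {R M N : Type*} [CommRing R] [AddCommGroup M]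
    [Module R M] [AddCommGroup N] [Module R N] [Module.Free R N] {s t : M ⊗[R] N}
    (h : ∀ f : Module.Dual R N,
      TensorProduct.rid R M (f.lTensor M s) = TensorProduct.rid R M (f.lTensor M t)) :
    s = t := by
  classical
  apply (equivFinsuppOfBasisRight (Module.Free.chooseBasis R N)).injective
  ext i
  simp only [equivFinsuppOfBasisRight_apply, h]

section Symplectic

variable {n : ℕ} {ω : (Fin (n + n) → ℝ) →ₗ[ℝ] (Fin (n + n) → ℝ) →ₗ[ℝ] ℝ}
  {e : Fin (n + n) → Fin (n + n) → ℝ}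

namespace IsSymplecticBasis

lemma map (he : IsSymplecticBasis ω e) (g : (Fin (n + n) → ℝ) ≃ₗ[ℝ] (Fin (n + n) → ℝ))
    (hg : ∀ x y, ω (g x) (g y) = ω x y) : IsSymplecticBasis ω (fun k => g (e k)) := by
  obtain ⟨⟨b, hb⟩, h₁, h₂, h₃⟩ := he
  exact ⟨⟨b.map g, by ext1 k; simp [hb]⟩, by simpa [hg] using h₁, by simpa [hg] using h₂,
    by simpa [hg] using h₃⟩

lemma apply_natAdd_castAdd (he : IsSymplecticBasis ω e) (halt : ω.IsAlt) (i j : Fin n) :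
    ω (e (Fin.natAdd n i)) (e (Fin.castAdd n j)) = -if j = i then 1 else 0 := by
  rw [← he.2.2.1 j i, halt.neg]

lemma sum_smul_sub_smul (he : IsSymplecticBasis ω e) (halt : ω.IsAlt)
    (hnd : ∀ x, (∀ y, ω x y = 0) → x = 0) (v : Fin (n + n) → ℝ) :
    ∑ i : Fin n, (ω v (e (Fin.natAdd n i)) • e (Fin.castAdd n i) -
      ω v (e (Fin.castAdd n i)) • e (Fin.natAdd n i)) = v := by
  obtain ⟨b, hb⟩ := he.1
  refine (sub_eq_zero.1 <| hnd _ fun y =>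
    LinearMap.congr_fun (b.ext (f₂ := 0) fun k => ?_) y).symm
  subst hb
  induction k using Fin.addCases <;>
    simp only [map_sub, map_sum, map_smul, LinearMap.sub_apply, LinearMap.sum_apply,
      LinearMap.smul_apply, smul_eq_mul, he.2.1, he.2.2.1, he.2.2.2,
      he.apply_natAdd_castAdd halt] <;>
    simp

end IsSymplecticBasis

def symplecticBivector (e : Fin (n + n) → Fin (n + n) → ℝ) :
    (Fin (n + n) → ℝ) ⊗[ℝ] (Fin (n + n) → ℝ) :=
  ∑ i : Fin n, (e (Fin.castAdd n i) ⊗ₜ[ℝ] e (Fin.natAdd n i) -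
    e (Fin.natAdd n i) ⊗ₜ[ℝ] e (Fin.castAdd n i))

lemma rid_lTensor_symplecticBivector (he : IsSymplecticBasis ω e) (halt : ω.IsAlt)
    (hnd : ∀ x, (∀ y, ω x y = 0) → x = 0) (x : Fin (n + n) → ℝ) :
    TensorProduct.rid ℝ _ ((ω x).lTensor _ (symplecticBivector e)) = x := by
  simp only [symplecticBivector, map_sum, map_sub, LinearMap.lTensor_tmul, rid_tmul]
  exact he.sum_smul_sub_smul halt hnd x

lemma symplecticBivector_eq {e' : Fin (n + n) → Fin (n + n) → ℝ} (he : IsSymplecticBasis ω e)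
    (he' : IsSymplecticBasis ω e') (halt : ω.IsAlt) (hnd : ∀ x, (∀ y, ω x y = 0) → x = 0) :
    symplecticBivector e = symplecticBivector e' := by
  have hinj : Function.Injective ω := fun x y hxy =>
    sub_eq_zero.1 <| hnd _ fun z => by simp [hxy]
  have hsurj : Function.Surjective ω :=
    (LinearMap.injective_iff_surjective_of_finrank_eq_finrank
      Subspace.dual_finrank_eq.symm).1 hinj
  refine TensorProduct.ext_of_rid_lTensor_dual fun f => ?_
  obtain ⟨x, rfl⟩ := hsurj f
  rw [rid_lTensor_symplecticBivector he halt hnd, rid_lTensor_symplecticBivector he' halt hnd]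

lemma xiF_eq_smul_map_symplecticBivector (v : Fin (n + n) → ℝ) :
    xiF e v = (1 / (2 * (n : ℝ) + 1)) •
      TensorProduct.map (LinearMap.mulRight ℝ (lin v) ∘ₗ
        Fintype.linearCombination ℝ MvPolynomial.X) (ExteriorAlgebra.ι ℝ)
        (symplecticBivector e) := by
  simp [xiF, symplecticBivector, ← lin_eq_linearCombination]

lemma xiF_eq_of_isSymplecticBasis {e' : Fin (n + n) → Fin (n + n) → ℝ}
    (he : IsSymplecticBasis ω e) (he' : IsSymplecticBasis ω e') (halt : ω.IsAlt)
    (hnd : ∀ x, (∀ y, ω x y = 0) → x = 0) :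
    xiF e = xiF e' := by
  ext1 v
  rw [xiF_eq_smul_map_symplecticBivector, xiF_eq_smul_map_symplecticBivector,
    symplecticBivector_eq he he' halt hnd]

lemma rho_xiF (g : (Fin (n + n) → ℝ) →ₗ[ℝ] (Fin (n + n) → ℝ))
    (e : Fin (n + n) → Fin (n + n) → ℝ) (v : Fin (n + n) → ℝ) :
    rho g (xiF e v) = xiF (fun k => g (e k)) (g v) := by
  simp only [rho, xiF, map_smul, map_sum, map_sub, TensorProduct.map_tmul,
    AlgHom.toLinearMap_apply, map_mul, aeval_lin, ExteriorAlgebra.map_apply_ι]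

lemma IsSymplecticBasis.apply_xiF (he : IsSymplecticBasis ω e) (halt : ω.IsAlt)
    (hnd : ∀ x, (∀ y, ω x y = 0) → x = 0) (φ : MM (n + n) →ₗ[ℝ] (Fin (n + n) → ℝ))
    (hφ : ∀ u₁ u₂ v : Fin (n + n) → ℝ,
      φ ((lin u₁ * lin u₂) ⊗ₜ[ℝ] ExteriorAlgebra.ι ℝ v) = ω u₁ v • u₂ + ω u₂ v • u₁)
    (v : Fin (n + n) → ℝ) :
    φ (xiF e v) = v := by
  have hterm : ∀ i : Fin n,
      φ ((lin (e (Fin.castAdd n i)) * lin v) ⊗ₜ[ℝ] ExteriorAlgebra.ι ℝ (e (Fin.natAdd n i))) -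
        φ ((lin (e (Fin.natAdd n i)) * lin v) ⊗ₜ[ℝ] ExteriorAlgebra.ι ℝ (e (Fin.castAdd n i)))
      = (2 : ℝ) • v + (ω v (e (Fin.natAdd n i)) • e (Fin.castAdd n i) -
          ω v (e (Fin.castAdd n i)) • e (Fin.natAdd n i)) := by
    intro i
    rw [hφ, hφ, he.2.2.1 i i, he.apply_natAdd_castAdd halt i i, if_pos rfl]
    module
  have h2n : (2 * (n : ℝ) + 1) ≠ 0 := by positivity
  simp only [xiF, map_smul, map_sum, map_sub, hterm, Finset.sum_add_distrib,
    he.sum_smul_sub_smul halt hnd, Finset.sum_const, Finset.card_univ, Fintype.card_fin]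
  rw [← Nat.cast_smul_eq_nsmul ℝ,
    show (n : ℝ) • (2 : ℝ) • v + v = (2 * (n : ℝ) + 1) • v by module,
    smul_smul, one_div_mul_cancel h2n, one_smul]

end Symplectic

/-- `ξ` is injective, `Sp(V,ω)`-equivariant, independent of the choice of
symplectic basis, and `φ ∘ ξ = Id` for any linear `φ` with
`φ(u₁u₂ ⊗ v) = ω(u₁,v)u₂ + ω(u₂,v)u₁`. -/
theorem stmt4 (n : ℕ)
    (ω : (Fin (n + n) → ℝ) →ₗ[ℝ] (Fin (n + n) → ℝ) →ₗ[ℝ] ℝ)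
    (halt : ∀ x, ω x x = 0)
    (hnd : ∀ x, (∀ y, ω x y = 0) → x = 0)
    (e : Fin (n + n) → Fin (n + n) → ℝ)
    (he : IsSymplecticBasis ω e) :
    Function.Injective (xiF e) ∧
    (∀ g : (Fin (n + n) → ℝ) ≃ₗ[ℝ] (Fin (n + n) → ℝ),
      (∀ x y, ω (g x) (g y) = ω x y) →
      ∀ v, rho (g : _ →ₗ[ℝ] _) (xiF e v) = xiF e (g v)) ∧
    (∀ e' : Fin (n + n) → Fin (n + n) → ℝ, IsSymplecticBasis ω e' →
      xiF e = xiF e') ∧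
    (∀ φ : MM (n + n) →ₗ[ℝ] (Fin (n + n) → ℝ),
      (∀ u₁ u₂ v : Fin (n + n) → ℝ,
        φ ((lin u₁ * lin u₂) ⊗ₜ[ℝ] ExteriorAlgebra.ι ℝ v) =
          ω u₁ v • u₂ + ω u₂ v • u₁) →
      ∀ v, φ (xiF e v) = v) := by
  have hleft := he.apply_xiF halt hnd
  refine ⟨Function.LeftInverse.injective (hleft _ (hessianContraction_tmul ω)),
    fun g hg v => ?_, fun e' he' => xiF_eq_of_isSymplecticBasis he he' halt hnd, hleft⟩
  rw [rho_xiF]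
  exact congrFun (xiF_eq_of_isSymplecticBasis (he.map g hg) he halt hnd) (g v)
end
end

section
/- Define η = Id − A_1∘π − ξ∘φ on S^2V ⊗ V. Then π∘η = 0, φ∘η = 0, and η restricts to the identity on ker φ ∩ ker π; consequently S^2V ⊗ V = Im A_1 ⊕ (ker φ ∩ ker π) ⊕ Im ξ, i.e. S^2V ⊗ V ≅ S^3V ⊕ A' ⊕ V as Sp(V,ω)-modules, where A' = ker φ ∩ ker π. -/
/-! On `S²V ⊗ V`, `A₁ ∘ π` and `ξ ∘ φ` are complementary idempotents: `π ∘ A₁ = id` and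
`φ ∘ A₁ = 0` on `S³V` (the latter because `ω` is alternating), while `π ∘ ξ = 0` (each summand
of `ξ v` is antisymmetric under swapping `eᵢ` and `fᵢ`) and `φ ∘ ξ = id`. The last identity is
where `1 / (2n + 1)` comes from: contracting the `i`-th summand of `ξ v` gives
`2 v + ω(v, fᵢ) eᵢ - ω(v, eᵢ) fᵢ`, and the symplectic expansion
`v = Σᵢ ω(v, fᵢ) eᵢ - ω(v, eᵢ) fᵢ` turns the sum into `(2n + 1) v`. Hence every `x` splits as
`A₁ (π x) + η x + ξ (φ x)` with `η x ∈ ker φ ∩ ker π`, and applying `π` and `φ` to a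
relation between the three summands shows that the splitting is direct. -/

open TensorProduct

set_option synthInstance.maxHeartbeats 1000000
set_option maxHeartbeats 1000000

noncomputable section

/-- The subspace `SᵖV ⊗ ΛᵠV` of the model, spanned by the decomposable
elements. -/
def piece (m p q : ℕ) : Submodule ℝ (MM m) :=
  Submodule.span ℝ
    {x | ∃ u : Fin p → Fin m → ℝ, ∃ v : Fin q → Fin m → ℝ, x = dec u v}

/-- `S³V` inside the symmetric algebra: the span of products of three linear
forms. -/
def S3 (m : ℕ) : Submodule ℝ (MvPolynomial (Fin m) ℝ) :=
  Submodule.span ℝ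
    {x | ∃ u : Fin 3 → Fin m → ℝ, x = lin (u 0) * lin (u 1) * lin (u 2)}

namespace KoszulSplitting

variable {R S M V : Type*} [Ring R] [AddCommGroup S] [Module R S] [AddCommGroup M] [Module R M]
  [AddCommGroup V] [Module R V]
  {A : S →ₗ[R] M} {π : M →ₗ[R] S} {ξ : V →ₗ[R] M} {φ : M →ₗ[R] V}
  {T : Submodule R S} {P K : Submodule R M}

def eta (A : S →ₗ[R] M) (π : M →ₗ[R] S) (ξ : V →ₗ[R] M) (φ : M →ₗ[R] V) : M →ₗ[R] M :=
  LinearMap.id - A ∘ₗ π - ξ ∘ₗ φ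

theorem eta_apply (x : M) : eta A π ξ φ x = x - A (π x) - ξ (φ x) := rfl

theorem map_eta_eq_zero_left (hπA : ∀ s ∈ T, π (A s) = s) (hπξ : ∀ v, π (ξ v) = 0)
    {x : M} (hx : π x ∈ T) : π (eta A π ξ φ x) = 0 := by
  rw [eta_apply, map_sub, map_sub, hπA _ hx, hπξ, sub_self, sub_zero]

theorem map_eta_eq_zero_right (hφA : ∀ s ∈ T, φ (A s) = 0) (hφξ : ∀ v, φ (ξ v) = v)
    {x : M} (hx : π x ∈ T) : φ (eta A π ξ φ x) = 0 := by
  rw [eta_apply, map_sub, map_sub, hφA _ hx, hφξ, sub_zero, sub_self]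

theorem eta_apply_of_mem_ker {x : M} (hφx : φ x = 0) (hπx : π x = 0) : eta A π ξ φ x = x := by
  rw [eta_apply, hφx, hπx, map_zero, map_zero, sub_zero, sub_zero]

theorem map_sup_sup_range_eq (hπA : ∀ s ∈ T, π (A s) = s) (hφA : ∀ s ∈ T, φ (A s) = 0)
    (hπξ : ∀ v, π (ξ v) = 0) (hφξ : ∀ v, φ (ξ v) = v) (hπP : P ≤ T.comap π)
    (hAT : T.map A ≤ P) (hξP : LinearMap.range ξ ≤ P) :
    T.map A ⊔ (P ⊓ LinearMap.ker φ ⊓ LinearMap.ker π) ⊔ LinearMap.range ξ = P := by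
  refine le_antisymm (sup_le (sup_le hAT (inf_le_left.trans inf_le_left)) hξP) fun x hx => ?_
  have hxT : π x ∈ T := hπP hx
  have hη : eta A π ξ φ x ∈ P ⊓ LinearMap.ker φ ⊓ LinearMap.ker π :=
    ⟨⟨sub_mem (sub_mem hx (hAT ⟨_, hxT, rfl⟩)) (hξP ⟨_, rfl⟩),
      map_eta_eq_zero_right hφA hφξ hxT⟩, map_eta_eq_zero_left hπA hπξ hxT⟩
  have hdecomp : x = A (π x) + eta A π ξ φ x + ξ (φ x) := by rw [eta_apply]; abel
  rw [hdecomp]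
  exact add_mem (add_mem (Submodule.mem_sup_left (Submodule.mem_sup_left ⟨_, hxT, rfl⟩))
    (Submodule.mem_sup_left (Submodule.mem_sup_right hη))) (Submodule.mem_sup_right ⟨_, rfl⟩)

theorem map_inf_sup_range_eq_bot (hπA : ∀ s ∈ T, π (A s) = s) (hπξ : ∀ v, π (ξ v) = 0)
    (hK : K ≤ LinearMap.ker π) : T.map A ⊓ (K ⊔ LinearMap.range ξ) = ⊥ := by
  refine eq_bot_iff.mpr fun x ⟨⟨s, hs, hsx⟩, hx⟩ => ?_
  obtain ⟨k, hk, _, ⟨v, rfl⟩, hkv⟩ := Submodule.mem_sup.mp hx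
  have hs0 : s = 0 := by
    rw [← hπA s hs, hsx, ← hkv, map_add, hK hk, hπξ, add_zero]
  rw [Submodule.mem_bot, ← hsx, hs0, map_zero]

theorem inf_map_sup_range_eq_bot (hπA : ∀ s ∈ T, π (A s) = s) (hφA : ∀ s ∈ T, φ (A s) = 0)
    (hπξ : ∀ v, π (ξ v) = 0) (hφξ : ∀ v, φ (ξ v) = v)
    (hK : K ≤ LinearMap.ker φ ⊓ LinearMap.ker π) : K ⊓ (T.map A ⊔ LinearMap.range ξ) = ⊥ := by
  refine eq_bot_iff.mpr fun x ⟨hxK, hx⟩ => ?_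
  obtain ⟨_, ⟨s, hs, rfl⟩, _, ⟨v, rfl⟩, hsv⟩ := Submodule.mem_sup.mp hx
  have hs0 : s = 0 := calc
    s = π (A s + ξ v) := by rw [map_add, hπA s hs, hπξ, add_zero]
    _ = 0 := by rw [hsv, (hK hxK).2]
  have hv0 : v = 0 := calc
    v = φ (A s + ξ v) := by rw [map_add, hφA s hs, hφξ, zero_add]
    _ = 0 := by rw [hsv, (hK hxK).1]
  rw [Submodule.mem_bot, ← hsv, hs0, hv0, map_zero, map_zero, add_zero]

theorem range_inf_map_sup_eq_bot (hφA : ∀ s ∈ T, φ (A s) = 0) (hφξ : ∀ v, φ (ξ v) = v)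
    (hK : K ≤ LinearMap.ker φ) : LinearMap.range ξ ⊓ (T.map A ⊔ K) = ⊥ := by
  refine eq_bot_iff.mpr fun x ⟨⟨v, hvx⟩, hx⟩ => ?_
  obtain ⟨_, ⟨s, hs, rfl⟩, k, hk, hsk⟩ := Submodule.mem_sup.mp hx
  have hv0 : v = 0 := by
    rw [← hφξ v, hvx, ← hsk, map_add, hφA s hs, hK hk, add_zero]
  rw [Submodule.mem_bot, ← hvx, hv0, map_zero]

end KoszulSplitting

theorem sum_symplectic_expansion {K V : Type*} [CommRing K] [AddCommGroup V] [Module K V]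
    {n : ℕ} {ω : V →ₗ[K] V →ₗ[K] K} (hω : ω.IsAlt) (b : Module.Basis (Fin (n + n)) K V)
    (hee : ∀ i j : Fin n, ω (b (Fin.castAdd n i)) (b (Fin.castAdd n j)) = 0)
    (hef : ∀ i j : Fin n, ω (b (Fin.castAdd n i)) (b (Fin.natAdd n j)) = if i = j then 1 else 0)
    (hff : ∀ i j : Fin n, ω (b (Fin.natAdd n i)) (b (Fin.natAdd n j)) = 0) (v : V) :
    ∑ i : Fin n, (ω v (b (Fin.natAdd n i)) • b (Fin.castAdd n i) -
      ω v (b (Fin.castAdd n i)) • b (Fin.natAdd n i)) = v := by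
  let L : V →ₗ[K] V := ∑ i : Fin n,
    ((ω.flip (b (Fin.natAdd n i))).smulRight (b (Fin.castAdd n i)) -
      (ω.flip (b (Fin.castAdd n i))).smulRight (b (Fin.natAdd n i)))
  have hL : L = LinearMap.id := by
    refine b.ext fun j => Fin.addCases (fun k => ?_) (fun k => ?_) j
    · simp [L, hef, hee, -Fin.natAdd_eq_addNat]
    · simp [L, hff, ← hω.neg _ (b (Fin.natAdd n k)), hef, -Fin.natAdd_eq_addNat]
  simpa [L] using LinearMap.congr_fun hL v

section KoszulMaps

variable {m : ℕ}

theorem dec_two_one (u : Fin 2 → Fin m → ℝ) (v : Fin 1 → Fin m → ℝ) :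
    dec u v = (lin (u 0) * lin (u 1)) ⊗ₜ[ℝ] ExteriorAlgebra.ι ℝ (v 0) := by
  simp [dec, symProd, wdg, Fin.prod_univ_two, List.ofFn_succ]

theorem tmul_mem_piece (a c d : Fin m → ℝ) :
    (lin a * lin c) ⊗ₜ[ℝ] ExteriorAlgebra.ι ℝ d ∈ piece m 2 1 :=
  Submodule.subset_span ⟨![a, c], ![d], by rw [dec_two_one]; rfl⟩

theorem piece_le_comap_S3 {π : MM m →ₗ[ℝ] MvPolynomial (Fin m) ℝ}
    (hπ : ∀ u₁ u₂ v : Fin m → ℝ, π ((lin u₁ * lin u₂) ⊗ₜ[ℝ] ExteriorAlgebra.ι ℝ v) =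
      (1 / 3 : ℝ) • (lin u₁ * lin u₂ * lin v)) :
    piece m 2 1 ≤ (S3 m).comap π := by
  refine Submodule.span_le.mpr ?_
  rintro _ ⟨u, v, rfl⟩
  rw [SetLike.mem_coe, Submodule.mem_comap, dec_two_one, hπ]
  exact Submodule.smul_mem _ _ (Submodule.subset_span ⟨![u 0, u 1, v 0], rfl⟩)

theorem map_S3_le_piece {A₁ : MvPolynomial (Fin m) ℝ →ₗ[ℝ] MM m}
    (hA₁ : ∀ u₁ u₂ u₃ : Fin m → ℝ,
      A₁ (lin u₁ * lin u₂ * lin u₃) =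
        (lin u₂ * lin u₃) ⊗ₜ[ℝ] ExteriorAlgebra.ι ℝ u₁ +
        (lin u₁ * lin u₃) ⊗ₜ[ℝ] ExteriorAlgebra.ι ℝ u₂ +
        (lin u₁ * lin u₂) ⊗ₜ[ℝ] ExteriorAlgebra.ι ℝ u₃) :
    (S3 m).map A₁ ≤ piece m 2 1 := by
  refine Submodule.map_le_iff_le_comap.mpr (Submodule.span_le.mpr ?_)
  rintro _ ⟨u, rfl⟩
  rw [SetLike.mem_coe, Submodule.mem_comap, hA₁]
  exact add_mem (add_mem (tmul_mem_piece _ _ _) (tmul_mem_piece _ _ _)) (tmul_mem_piece _ _ _)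

theorem projection_koszul_eq_self {A₁ : MvPolynomial (Fin m) ℝ →ₗ[ℝ] MM m}
    {π : MM m →ₗ[ℝ] MvPolynomial (Fin m) ℝ}
    (hA₁ : ∀ u₁ u₂ u₃ : Fin m → ℝ,
      A₁ (lin u₁ * lin u₂ * lin u₃) =
        (lin u₂ * lin u₃) ⊗ₜ[ℝ] ExteriorAlgebra.ι ℝ u₁ +
        (lin u₁ * lin u₃) ⊗ₜ[ℝ] ExteriorAlgebra.ι ℝ u₂ +
        (lin u₁ * lin u₂) ⊗ₜ[ℝ] ExteriorAlgebra.ι ℝ u₃)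
    (hπ : ∀ u₁ u₂ v : Fin m → ℝ, π ((lin u₁ * lin u₂) ⊗ₜ[ℝ] ExteriorAlgebra.ι ℝ v) =
      (1 / 3 : ℝ) • (lin u₁ * lin u₂ * lin v)) :
    ∀ s ∈ S3 m, π (A₁ s) = s := by
  refine fun s hs => LinearMap.eqOn_span (f := π ∘ₗ A₁) (g := LinearMap.id) ?_ hs
  rintro _ ⟨u, rfl⟩
  have h₁ : lin (u 1) * lin (u 2) * lin (u 0) = lin (u 0) * lin (u 1) * lin (u 2) := by ring
  have h₂ : lin (u 0) * lin (u 2) * lin (u 1) = lin (u 0) * lin (u 1) * lin (u 2) := by ring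
  simp only [LinearMap.comp_apply, LinearMap.id_apply, hA₁, map_add, hπ, h₁, h₂]
  module

theorem contraction_koszul_eq_zero {ω : (Fin m → ℝ) →ₗ[ℝ] (Fin m → ℝ) →ₗ[ℝ] ℝ}
    (hω : ω.IsAlt) {A₁ : MvPolynomial (Fin m) ℝ →ₗ[ℝ] MM m} {φ : MM m →ₗ[ℝ] (Fin m → ℝ)}
    (hA₁ : ∀ u₁ u₂ u₃ : Fin m → ℝ,
      A₁ (lin u₁ * lin u₂ * lin u₃) =
        (lin u₂ * lin u₃) ⊗ₜ[ℝ] ExteriorAlgebra.ι ℝ u₁ +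
        (lin u₁ * lin u₃) ⊗ₜ[ℝ] ExteriorAlgebra.ι ℝ u₂ +
        (lin u₁ * lin u₂) ⊗ₜ[ℝ] ExteriorAlgebra.ι ℝ u₃)
    (hφ : ∀ u₁ u₂ v : Fin m → ℝ,
      φ ((lin u₁ * lin u₂) ⊗ₜ[ℝ] ExteriorAlgebra.ι ℝ v) = ω u₁ v • u₂ + ω u₂ v • u₁) :
    ∀ s ∈ S3 m, φ (A₁ s) = 0 := by
  refine fun s hs => LinearMap.eqOn_span (f := φ ∘ₗ A₁) (g := 0) ?_ hs
  rintro _ ⟨u, rfl⟩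
  simp only [LinearMap.comp_apply, LinearMap.zero_apply, hA₁, map_add, hφ,
    ← hω.neg (u 0) (u 1), ← hω.neg (u 0) (u 2), ← hω.neg (u 1) (u 2)]
  module

end KoszulMaps

theorem projection_xiF_eq_zero {n : ℕ} {π : MM (n + n) →ₗ[ℝ] MvPolynomial (Fin (n + n)) ℝ}
    (hπ : ∀ u₁ u₂ v : Fin (n + n) → ℝ, π ((lin u₁ * lin u₂) ⊗ₜ[ℝ] ExteriorAlgebra.ι ℝ v) =
      (1 / 3 : ℝ) • (lin u₁ * lin u₂ * lin v))
    (e : Fin (n + n) → Fin (n + n) → ℝ) (v : Fin (n + n) → ℝ) : π (xiF e v) = 0 := by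
  simp only [xiF, map_smul, map_sum, map_sub, hπ]
  refine (congrArg _ (Finset.sum_eq_zero fun i _ => ?_)).trans (smul_zero _)
  rw [sub_eq_zero]
  ring_nf

theorem xiF_mem_piece {n : ℕ} (e : Fin (n + n) → Fin (n + n) → ℝ) (v : Fin (n + n) → ℝ) :
    xiF e v ∈ piece (n + n) 2 1 :=
  Submodule.smul_mem _ _ <| Submodule.sum_mem _ fun _ _ =>
    sub_mem (tmul_mem_piece _ _ _) (tmul_mem_piece _ _ _)

theorem contraction_xiF_eq_self {n : ℕ} {ω : (Fin (n + n) → ℝ) →ₗ[ℝ] (Fin (n + n) → ℝ) →ₗ[ℝ] ℝ}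
    (hω : ω.IsAlt) (b : Module.Basis (Fin (n + n)) ℝ (Fin (n + n) → ℝ))
    (hee : ∀ i j : Fin n, ω (b (Fin.castAdd n i)) (b (Fin.castAdd n j)) = 0)
    (hef : ∀ i j : Fin n, ω (b (Fin.castAdd n i)) (b (Fin.natAdd n j)) = if i = j then 1 else 0)
    (hff : ∀ i j : Fin n, ω (b (Fin.natAdd n i)) (b (Fin.natAdd n j)) = 0)
    {φ : MM (n + n) →ₗ[ℝ] (Fin (n + n) → ℝ)}
    (hφ : ∀ u₁ u₂ v : Fin (n + n) → ℝ,
      φ ((lin u₁ * lin u₂) ⊗ₜ[ℝ] ExteriorAlgebra.ι ℝ v) = ω u₁ v • u₂ + ω u₂ v • u₁)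
    (v : Fin (n + n) → ℝ) : φ (xiF b v) = v := by
  have hterm : ∀ i : Fin n,
      φ ((lin (b (Fin.castAdd n i)) * lin v) ⊗ₜ[ℝ] ExteriorAlgebra.ι ℝ (b (Fin.natAdd n i)) -
        (lin (b (Fin.natAdd n i)) * lin v) ⊗ₜ[ℝ] ExteriorAlgebra.ι ℝ (b (Fin.castAdd n i))) =
      (2 : ℝ) • v + (ω v (b (Fin.natAdd n i)) • b (Fin.castAdd n i) -
        ω v (b (Fin.castAdd n i)) • b (Fin.natAdd n i)) := by
    intro i
    rw [map_sub, hφ, hφ, ← hω.neg (b (Fin.castAdd n i)), hef, if_pos rfl]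
    module
  rw [xiF, map_smul, map_sum, Finset.sum_congr rfl fun i _ => hterm i, Finset.sum_add_distrib,
    sum_symplectic_expansion hω b hee hef hff, Finset.sum_const, Finset.card_univ,
    Fintype.card_fin, ← Nat.cast_smul_eq_nsmul ℝ, smul_smul]
  have hpos : (2 * (n : ℝ) + 1) ≠ 0 := by positivity
  match_scalars
  field_simp

open KoszulSplitting in
theorem stmt7_general (n : ℕ)
    (ω : (Fin (n + n) → ℝ) →ₗ[ℝ] (Fin (n + n) → ℝ) →ₗ[ℝ] ℝ)
    (halt : ∀ x, ω x x = 0)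
    (e : Fin (n + n) → Fin (n + n) → ℝ)
    (hb : ∃ b : Module.Basis (Fin (n + n)) ℝ (Fin (n + n) → ℝ), ⇑b = e)
    (hee : ∀ i j : Fin n, ω (e (Fin.castAdd n i)) (e (Fin.castAdd n j)) = 0)
    (hef : ∀ i j : Fin n, ω (e (Fin.castAdd n i)) (e (Fin.natAdd n j)) =
      if i = j then 1 else 0)
    (hff : ∀ i j : Fin n, ω (e (Fin.natAdd n i)) (e (Fin.natAdd n j)) = 0)
    (A₁ : MvPolynomial (Fin (n + n)) ℝ →ₗ[ℝ] MM (n + n))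
    (hA₁ : ∀ u₁ u₂ u₃ : Fin (n + n) → ℝ,
      A₁ (lin u₁ * lin u₂ * lin u₃) =
        (lin u₂ * lin u₃) ⊗ₜ[ℝ] ExteriorAlgebra.ι ℝ u₁ +
        (lin u₁ * lin u₃) ⊗ₜ[ℝ] ExteriorAlgebra.ι ℝ u₂ +
        (lin u₁ * lin u₂) ⊗ₜ[ℝ] ExteriorAlgebra.ι ℝ u₃)
    (π : MM (n + n) →ₗ[ℝ] MvPolynomial (Fin (n + n)) ℝ)
    (hπ : ∀ u₁ u₂ v : Fin (n + n) → ℝ,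
      π ((lin u₁ * lin u₂) ⊗ₜ[ℝ] ExteriorAlgebra.ι ℝ v) =
        (1 / 3 : ℝ) • (lin u₁ * lin u₂ * lin v))
    (φ : MM (n + n) →ₗ[ℝ] (Fin (n + n) → ℝ))
    (hφ : ∀ u₁ u₂ v : Fin (n + n) → ℝ,
      φ ((lin u₁ * lin u₂) ⊗ₜ[ℝ] ExteriorAlgebra.ι ℝ v) =
        ω u₁ v • u₂ + ω u₂ v • u₁)
    (ξ : (Fin (n + n) → ℝ) →ₗ[ℝ] MM (n + n))
    (hξ : ∀ v, ξ v = xiF e v) :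
    (∀ x ∈ piece (n + n) 2 1,
      π (((LinearMap.id : MM (n + n) →ₗ[ℝ] MM (n + n)) - A₁ ∘ₗ π - ξ ∘ₗ φ) x) = 0) ∧
    (∀ x ∈ piece (n + n) 2 1,
      φ (((LinearMap.id : MM (n + n) →ₗ[ℝ] MM (n + n)) - A₁ ∘ₗ π - ξ ∘ₗ φ) x) = 0) ∧
    (∀ x ∈ piece (n + n) 2 1, φ x = 0 → π x = 0 →
      ((LinearMap.id : MM (n + n) →ₗ[ℝ] MM (n + n)) - A₁ ∘ₗ π - ξ ∘ₗ φ) x = x) ∧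
    (Submodule.map A₁ (S3 (n + n)) ⊔
      (piece (n + n) 2 1 ⊓ LinearMap.ker φ ⊓ LinearMap.ker π) ⊔
      LinearMap.range ξ = piece (n + n) 2 1) ∧
    (Submodule.map A₁ (S3 (n + n)) ⊓
      ((piece (n + n) 2 1 ⊓ LinearMap.ker φ ⊓ LinearMap.ker π) ⊔
        LinearMap.range ξ) = ⊥) ∧
    ((piece (n + n) 2 1 ⊓ LinearMap.ker φ ⊓ LinearMap.ker π) ⊓
      (Submodule.map A₁ (S3 (n + n)) ⊔ LinearMap.range ξ) = ⊥) ∧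
    (LinearMap.range ξ ⊓
      (Submodule.map A₁ (S3 (n + n)) ⊔
        (piece (n + n) 2 1 ⊓ LinearMap.ker φ ⊓ LinearMap.ker π)) = ⊥) := by
  obtain ⟨b, rfl⟩ := hb
  have hπA := projection_koszul_eq_self hA₁ hπ
  have hφA := contraction_koszul_eq_zero halt hA₁ hφ
  have hπξ : ∀ v, π (ξ v) = 0 := fun v => (hξ v).symm ▸ projection_xiF_eq_zero hπ b v
  have hφξ : ∀ v, φ (ξ v) = v := fun v =>
    (hξ v).symm ▸ contraction_xiF_eq_self halt b hee hef hff hφ v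
  have hπP := piece_le_comap_S3 hπ
  have hξP : LinearMap.range ξ ≤ piece (n + n) 2 1 := by
    rintro _ ⟨v, rfl⟩
    exact hξ v ▸ xiF_mem_piece b v
  exact ⟨fun x hx => map_eta_eq_zero_left hπA hπξ (hπP hx),
    fun x hx => map_eta_eq_zero_right hφA hφξ (hπP hx),
    fun x _ hφx hπx => eta_apply_of_mem_ker hφx hπx,
    map_sup_sup_range_eq hπA hφA hπξ hφξ hπP (map_S3_le_piece hA₁) hξP,
    map_inf_sup_range_eq_bot hπA hπξ inf_le_right,
    inf_map_sup_range_eq_bot hπA hφA hπξ hφξ fun x hx => ⟨hx.1.2, hx.2⟩,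
    range_inf_map_sup_eq_bot hφA hφξ fun x hx => hx.1.2⟩

/-- `η = Id − A₁∘π − ξ∘φ` on `S²V ⊗ V` satisfies `π∘η = 0`, `φ∘η = 0`, is the
identity on `ker φ ∩ ker π`, and yields the `Sp(V,ω)`-module decomposition
`S²V ⊗ V = Im A₁ ⊕ (ker φ ∩ ker π) ⊕ Im ξ ≅ S³V ⊕ 𝒜' ⊕ V`. -/
theorem stmt7 (n : ℕ)
    (ω : (Fin (n + n) → ℝ) →ₗ[ℝ] (Fin (n + n) → ℝ) →ₗ[ℝ] ℝ)
    (halt : ∀ x, ω x x = 0)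
    (hnd : ∀ x, (∀ y, ω x y = 0) → x = 0)
    (e : Fin (n + n) → Fin (n + n) → ℝ)
    (hb : ∃ b : Module.Basis (Fin (n + n)) ℝ (Fin (n + n) → ℝ), ⇑b = e)
    (hee : ∀ i j : Fin n, ω (e (Fin.castAdd n i)) (e (Fin.castAdd n j)) = 0)
    (hef : ∀ i j : Fin n, ω (e (Fin.castAdd n i)) (e (Fin.natAdd n j)) =
      if i = j then 1 else 0)
    (hff : ∀ i j : Fin n, ω (e (Fin.natAdd n i)) (e (Fin.natAdd n j)) = 0)
    (A₁ : MvPolynomial (Fin (n + n)) ℝ →ₗ[ℝ] MM (n + n))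
    (hA₁ : ∀ u₁ u₂ u₃ : Fin (n + n) → ℝ,
      A₁ (lin u₁ * lin u₂ * lin u₃) =
        (lin u₂ * lin u₃) ⊗ₜ[ℝ] ExteriorAlgebra.ι ℝ u₁ +
        (lin u₁ * lin u₃) ⊗ₜ[ℝ] ExteriorAlgebra.ι ℝ u₂ +
        (lin u₁ * lin u₂) ⊗ₜ[ℝ] ExteriorAlgebra.ι ℝ u₃)
    (π : MM (n + n) →ₗ[ℝ] MvPolynomial (Fin (n + n)) ℝ)
    (hπ : ∀ u₁ u₂ v : Fin (n + n) → ℝ,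
      π ((lin u₁ * lin u₂) ⊗ₜ[ℝ] ExteriorAlgebra.ι ℝ v) =
        (1 / 3 : ℝ) • (lin u₁ * lin u₂ * lin v))
    (φ : MM (n + n) →ₗ[ℝ] (Fin (n + n) → ℝ))
    (hφ : ∀ u₁ u₂ v : Fin (n + n) → ℝ,
      φ ((lin u₁ * lin u₂) ⊗ₜ[ℝ] ExteriorAlgebra.ι ℝ v) =
        ω u₁ v • u₂ + ω u₂ v • u₁)
    (ξ : (Fin (n + n) → ℝ) →ₗ[ℝ] MM (n + n))
    (hξ : ∀ v, ξ v = xiF e v) :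
    (∀ x ∈ piece (n + n) 2 1,
      π (((LinearMap.id : MM (n + n) →ₗ[ℝ] MM (n + n)) - A₁ ∘ₗ π - ξ ∘ₗ φ) x) = 0) ∧
    (∀ x ∈ piece (n + n) 2 1,
      φ (((LinearMap.id : MM (n + n) →ₗ[ℝ] MM (n + n)) - A₁ ∘ₗ π - ξ ∘ₗ φ) x) = 0) ∧
    (∀ x ∈ piece (n + n) 2 1, φ x = 0 → π x = 0 →
      ((LinearMap.id : MM (n + n) →ₗ[ℝ] MM (n + n)) - A₁ ∘ₗ π - ξ ∘ₗ φ) x = x) ∧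
    (Submodule.map A₁ (S3 (n + n)) ⊔
      (piece (n + n) 2 1 ⊓ LinearMap.ker φ ⊓ LinearMap.ker π) ⊔
      LinearMap.range ξ = piece (n + n) 2 1) ∧
    (Submodule.map A₁ (S3 (n + n)) ⊓
      ((piece (n + n) 2 1 ⊓ LinearMap.ker φ ⊓ LinearMap.ker π) ⊔
        LinearMap.range ξ) = ⊥) ∧
    ((piece (n + n) 2 1 ⊓ LinearMap.ker φ ⊓ LinearMap.ker π) ⊓
      (Submodule.map A₁ (S3 (n + n)) ⊔ LinearMap.range ξ) = ⊥) ∧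
    (LinearMap.range ξ ⊓
      (Submodule.map A₁ (S3 (n + n)) ⊔
        (piece (n + n) 2 1 ⊓ LinearMap.ker φ ⊓ LinearMap.ker π)) = ⊥) :=
  stmt7_general n ω halt e hb hee hef hff A₁ hA₁ π hπ φ hφ ξ hξ
end
end

section
/- For n > 1, the four quadratic symplectic traces r_1(Q) = Q_{ijk}Q_{pql}ω^{ik}ω^{jp}ω^{ql}, r_2(Q) = Q_{ijk}Q_{pql}ω^{ij}ω^{kp}ω^{ql}, r_3(Q) = Q_{ijk}Q_{pql}ω^{ik}ω^{jl}ω^{pq}, r_4(Q) = Q_{ijk}Q_{pql}ω^{iq}ω^{jl}ω^{kp} are linearly independent functionals of 3-tensors Q (i.e. linearly independent as quadratic forms on V⊗V⊗V). -/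
set_option synthInstance.maxHeartbeats 1000000
set_option maxHeartbeats 1000000

open Matrix

noncomputable section

/-- A general quadratic symplectic trace of a 3-tensor `Q`: the contraction of
`Q ⊗ Q`, with its six indices rearranged by a permutation `σ`, against three
copies of the inverse symplectic matrix `W = (ω^{ij})`. -/
def qtrace {m : ℕ} (W : Matrix (Fin m) (Fin m) ℝ) (σ : Equiv.Perm (Fin 6))
    (Q : Fin m → Fin m → Fin m → ℝ) : ℝ :=
  ∑ f : Fin 6 → Fin m,
    Q (f (σ 0)) (f (σ 1)) (f (σ 2)) * Q (f (σ 3)) (f (σ 4)) (f (σ 5)) *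
      W (f 0) (f 1) * W (f 2) (f 3) * W (f 4) (f 5)

/-- `r₁(Q) = Q_{ijk}Q_{pql} ω^{ik}ω^{jp}ω^{ql}`. -/
def r₁ {m : ℕ} (W : Matrix (Fin m) (Fin m) ℝ)
    (Q : Fin m → Fin m → Fin m → ℝ) : ℝ :=
  ∑ i, ∑ j, ∑ k, ∑ p, ∑ q, ∑ l, Q i j k * Q p q l * W i k * W j p * W q l

/-- `r₂(Q) = Q_{ijk}Q_{pql} ω^{ij}ω^{kp}ω^{ql}`. -/
def r₂ {m : ℕ} (W : Matrix (Fin m) (Fin m) ℝ)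
    (Q : Fin m → Fin m → Fin m → ℝ) : ℝ :=
  ∑ i, ∑ j, ∑ k, ∑ p, ∑ q, ∑ l, Q i j k * Q p q l * W i j * W k p * W q l

/-- `r₃(Q) = Q_{ijk}Q_{pql} ω^{ik}ω^{jl}ω^{pq}`. -/
def r₃ {m : ℕ} (W : Matrix (Fin m) (Fin m) ℝ)
    (Q : Fin m → Fin m → Fin m → ℝ) : ℝ :=
  ∑ i, ∑ j, ∑ k, ∑ p, ∑ q, ∑ l, Q i j k * Q p q l * W i k * W j l * W p q

/-- `r₄(Q) = Q_{ijk}Q_{pql} ω^{iq}ω^{jl}ω^{kp}`. -/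
def r₄ {m : ℕ} (W : Matrix (Fin m) (Fin m) ℝ)
    (Q : Fin m → Fin m → Fin m → ℝ) : ℝ :=
  ∑ i, ∑ j, ∑ k, ∑ p, ∑ q, ∑ l, Q i j k * Q p q l * W i q * W j l * W k p

/-!
Evaluate the relation `a r₁ + b r₂ + c r₃ + d r₄ = 0` on tensors
`Q = u ⊗ v ⊗ w + u' ⊗ v' ⊗ w'`: each `rᵢ(Q)` is then a sum of four products of three
values `ω(x, y)` of the nondegenerate alternating form with matrix `(ω^{ij})`. Since
`dim V ≥ 4`, this form admits two mutually orthogonal hyperbolic pairs `(a₁, a₂)`, `(b₁, b₂)`,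
and for four suitable choices of `u, v, w, u', v', w'` among them, all but one of the `rᵢ(Q)`
vanish while the remaining one is `±1`.
-/

namespace LinearMap

variable {K V : Type*} [Field K] [AddCommGroup V] [Module K V] {B : V →ₗ[K] V →ₗ[K] K}

lemma SeparatingLeft.exists_apply_eq_one [Nontrivial V] (hB : B.SeparatingLeft) :
    ∃ x y, B x y = 1 := by
  obtain ⟨x, hx⟩ := exists_ne (0 : V)
  obtain ⟨y, hy⟩ : ∃ y, B x y ≠ 0 := by
    by_contra! h
    exact hx (hB x h)
  exact ⟨x, (B x y)⁻¹ • y, by rw [map_smul, smul_eq_mul, inv_mul_cancel₀ hy]⟩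

lemma IsAlt.exists_orthogonal_hyperbolic_pairs [FiniteDimensional K V] (hAlt : B.IsAlt)
    (hB : B.SeparatingLeft) (hV : 2 < Module.finrank K V) :
    ∃ a₁ a₂ b₁ b₂, B a₁ a₂ = 1 ∧ B b₁ b₂ = 1 ∧
      B a₁ b₁ = 0 ∧ B a₁ b₂ = 0 ∧ B a₂ b₁ = 0 ∧ B a₂ b₂ = 0 := by
  have : Nontrivial V := Module.nontrivial_of_finrank_pos (R := K) (by omega)
  obtain ⟨a₁, a₂, ha⟩ := hB.exists_apply_eq_one
  have ha' : B a₂ a₁ = -1 := by rw [← hAlt.neg, ha]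
  -- the projection onto the `B`-orthogonal complement of `span {a₁, a₂}`
  set P : V → V := fun v => v + B a₂ v • a₁ - B a₁ v • a₂ with hP
  have hP₁ (v : V) : B a₁ (P v) = 0 := by simp [hP, ha, hAlt.self_eq_zero]
  have hP₂ (v : V) : B a₂ (P v) = 0 := by simp [hP, ha', hAlt.self_eq_zero]
  obtain ⟨u, v, huv⟩ : ∃ u v, B (P u) (P v) ≠ 0 := by
    by_contra! h
    have hP₀ (u : V) : P u = 0 := hB _ fun v => by
      have hv : v = P v - B a₂ v • a₁ + B a₁ v • a₂ := by simp only [hP]; abel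
      rw [hv]
      simp [h, hAlt.eq_iff.mp (hP₁ u), hAlt.eq_iff.mp (hP₂ u)]
    have hspan : Submodule.span K (Set.range ![a₁, a₂]) = ⊤ := by
      refine eq_top_iff.2 fun v _ => ?_
      have hv : v = B a₁ v • a₂ - B a₂ v • a₁ := by
        rw [← sub_eq_zero, ← hP₀ v]
        simp only [hP]
        abel
      rw [hv]
      exact Submodule.sub_mem _ (Submodule.smul_mem _ _ (Submodule.subset_span ⟨1, rfl⟩))
        (Submodule.smul_mem _ _ (Submodule.subset_span ⟨0, rfl⟩))
    have := finrank_range_le_card (R := K) ![a₁, a₂]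
    rw [Set.finrank, hspan, finrank_top, Fintype.card_fin] at this
    omega
  refine ⟨a₁, a₂, P u, (B (P u) (P v))⁻¹ • P v, ha, ?_, hP₁ u, ?_, hP₂ u, ?_⟩ <;>
    simp [inv_mul_cancel₀ huv, hP₁, hP₂]

end LinearMap

namespace Matrix

variable {m R : Type*} [Fintype m] [DecidableEq m]

lemma isAlt_toLinearMap₂' [CommRing R] [IsDomain R] [CharZero R] {W : Matrix m m R}
    (hW : Wᵀ = -W) : (toLinearMap₂' R W : (m → R) →ₗ[R] (m → R) →ₗ[R] R).IsAlt := by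
  intro x
  have h : x ⬝ᵥ W *ᵥ x = -(x ⬝ᵥ W *ᵥ x) := by
    conv_lhs => rw [dotProduct_mulVec, ← mulVec_transpose, hW, dotProduct_comm]
    rw [neg_mulVec, dotProduct_neg]
  rw [toLinearMap₂'_apply']
  exact self_eq_neg.mp h

lemma transpose_nonsing_inv_eq_neg [CommRing R] {A : Matrix m m R} (hA : Aᵀ = -A)
    (h : IsUnit A.det) : A⁻¹ᵀ = -A⁻¹ := by
  rw [transpose_nonsing_inv, hA]
  refine inv_eq_right_inv ?_
  rw [neg_mul, mul_neg, neg_neg, mul_nonsing_inv A h]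

end Matrix

section Evaluation

variable {m : ℕ} (W : Matrix (Fin m) (Fin m) ℝ) (u v w u' v' w' : Fin m → ℝ)

local notation "ω" => toLinearMap₂' ℝ W

lemma r₁_pure_add_pure :
    r₁ W (fun i j k => u i * v j * w k + u' i * v' j * w' k) =
      ω v w * ω v u * ω u w + ω v' w' * ω v u' * ω u w
      + ω v w * ω v' u * ω u' w' + ω v' w' * ω v' u' * ω u' w' := by
  have key (u v w u' v' w' : Fin m → ℝ) :
      ∑ i, ∑ j, ∑ k, ∑ p, ∑ q, ∑ l,
        (u i * v j * w k) * (u' p * v' q * w' l) * W i k * W j p * W q l =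
      ω v' w' * ω v u' * ω u w := by
    simp only [toLinearMap₂'_apply, smul_eq_mul, Finset.sum_mul, Finset.mul_sum]
    conv_lhs => enter [2, x1]; rw [Finset.sum_comm]
    ac_rfl
  simp only [r₁, add_mul, mul_add, Finset.sum_add_distrib, key]
  ring

lemma r₂_pure_add_pure :
    r₂ W (fun i j k => u i * v j * w k + u' i * v' j * w' k) =
      ω v w * ω w u * ω u v + ω v' w' * ω w u' * ω u v
      + ω v w * ω w' u * ω u' v' + ω v' w' * ω w' u' * ω u' v' := by
  have key (u v w u' v' w' : Fin m → ℝ) :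
      ∑ i, ∑ j, ∑ k, ∑ p, ∑ q, ∑ l,
        (u i * v j * w k) * (u' p * v' q * w' l) * W i j * W k p * W q l =
      ω v' w' * ω w u' * ω u v := by
    simp only [toLinearMap₂'_apply, smul_eq_mul, Finset.sum_mul, Finset.mul_sum]
    ac_rfl
  simp only [r₂, add_mul, mul_add, Finset.sum_add_distrib, key]
  ring

lemma r₃_pure_add_pure :
    r₃ W (fun i j k => u i * v j * w k + u' i * v' j * w' k) =
      ω u v * ω v w * ω u w + ω u' v' * ω v w' * ω u w
      + ω u v * ω v' w * ω u' w' + ω u' v' * ω v' w' * ω u' w' := by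
  have key (u v w u' v' w' : Fin m → ℝ) :
      ∑ i, ∑ j, ∑ k, ∑ p, ∑ q, ∑ l,
        (u i * v j * w k) * (u' p * v' q * w' l) * W i k * W j l * W p q =
      ω u' v' * ω v w' * ω u w := by
    simp only [toLinearMap₂'_apply, smul_eq_mul, Finset.sum_mul, Finset.mul_sum]
    conv_lhs => enter [2, x1]; rw [Finset.sum_comm]
    conv_lhs => enter [2, x1, 2, x2, 2, x3, 2, x4]; rw [Finset.sum_comm]
    conv_lhs => enter [2, x1, 2, x2, 2, x3]; rw [Finset.sum_comm]
    ac_rfl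
  simp only [r₃, add_mul, mul_add, Finset.sum_add_distrib, key]
  ring

lemma r₄_pure_add_pure :
    r₄ W (fun i j k => u i * v j * w k + u' i * v' j * w' k) =
      ω w u * ω v w * ω u v + ω w u' * ω v w' * ω u v'
      + ω w' u * ω v' w * ω u' v + ω w' u' * ω v' w' * ω u' v' := by
  have key (u v w u' v' w' : Fin m → ℝ) :
      ∑ i, ∑ j, ∑ k, ∑ p, ∑ q, ∑ l,
        (u i * v j * w k) * (u' p * v' q * w' l) * W i q * W j l * W k p =
      ω w u' * ω v w' * ω u v' := by
    simp only [toLinearMap₂'_apply, smul_eq_mul, Finset.sum_mul, Finset.mul_sum]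
    conv_lhs => enter [2, x1, 2, x2, 2, x3]; rw [Finset.sum_comm]
    conv_lhs => enter [2, x1, 2, x2]; rw [Finset.sum_comm]
    conv_lhs => enter [2, x1]; rw [Finset.sum_comm]
    conv_lhs => enter [2, x1, 2, x2, 2, x3, 2, x4]; rw [Finset.sum_comm]
    conv_lhs => enter [2, x1, 2, x2, 2, x3]; rw [Finset.sum_comm]
    ac_rfl
  simp only [r₄, add_mul, mul_add, Finset.sum_add_distrib, key]
  ring

lemma eq_zero_of_forall_relation_of_hyperbolic_pairs (hW : Wᵀ = -W)
    {a₁ a₂ b₁ b₂ : Fin m → ℝ}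
    (h₁₂ : ω a₁ a₂ = 1) (h₃₄ : ω b₁ b₂ = 1) (h₁₃ : ω a₁ b₁ = 0) (h₁₄ : ω a₁ b₂ = 0)
    (h₂₃ : ω a₂ b₁ = 0) (h₂₄ : ω a₂ b₂ = 0) {a b c d : ℝ}
    (h : ∀ Q, a * r₁ W Q + b * r₂ W Q + c * r₃ W Q + d * r₄ W Q = 0) :
    a = 0 ∧ b = 0 ∧ c = 0 ∧ d = 0 := by
  have hAlt := isAlt_toLinearMap₂' hW
  have h₂₁ : ω a₂ a₁ = -1 := by rw [← hAlt.neg, h₁₂]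
  have h₄₃ : ω b₂ b₁ = -1 := by rw [← hAlt.neg, h₃₄]
  have h₃₁ : ω b₁ a₁ = 0 := hAlt.eq_iff.mp h₁₃
  have h₄₁ : ω b₂ a₁ = 0 := hAlt.eq_iff.mp h₁₄
  have h₃₂ : ω b₁ a₂ = 0 := hAlt.eq_iff.mp h₂₃
  have h₄₂ : ω b₂ a₂ = 0 := hAlt.eq_iff.mp h₂₄
  have e₁ := h (fun i j k => a₁ i * a₁ j * a₂ k + a₂ i * b₁ j * b₂ k)
  have e₂ := h (fun i j k => a₁ i * a₂ j * a₁ k + a₂ i * b₂ j * b₁ k)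
  have e₃ := h (fun i j k => b₁ i * b₁ j * a₂ k + b₂ i * a₁ j * b₂ k)
  have e₄ := h (fun i j k => a₂ i * a₁ j * b₁ k + b₁ i * b₂ j * b₂ k)
  simp only [r₁_pure_add_pure, r₂_pure_add_pure, r₃_pure_add_pure, r₄_pure_add_pure,
    hAlt.self_eq_zero, h₁₂, h₃₄, h₁₃, h₁₄, h₂₃, h₂₄, h₂₁, h₄₃, h₃₁, h₄₁, h₃₂, h₄₂,
    mul_zero, mul_one, add_zero, zero_add, mul_neg, neg_zero, neg_neg, neg_eq_zero] at e₁ e₂ e₃ e₄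
  exact ⟨e₁, e₂, e₄, e₃⟩

end Evaluation

/-- For `n > 1`, the four quadratic symplectic traces `r₁, r₂, r₃, r₄` are
linearly independent as quadratic forms on the space of 3-tensors. -/
theorem stmt14 (n : ℕ) (hn : 2 ≤ n) (Ω : Matrix (Fin (2 * n)) (Fin (2 * n)) ℝ)
    (hskew : Ωᵀ = -Ω) (hinv : IsUnit Ω.det) :
    ∀ a b c d : ℝ,
      (∀ Q : Fin (2 * n) → Fin (2 * n) → Fin (2 * n) → ℝ,
        a * r₁ Ω⁻¹ Q + b * r₂ Ω⁻¹ Q + c * r₃ Ω⁻¹ Q + d * r₄ Ω⁻¹ Q = 0) →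
      a = 0 ∧ b = 0 ∧ c = 0 ∧ d = 0 := by
  intro a b c d h
  have hW : Ω⁻¹ᵀ = -Ω⁻¹ := transpose_nonsing_inv_eq_neg hskew hinv
  have hsep := LinearMap.separatingLeft_toLinearMap₂'_of_det_ne_zero'
    (isUnit_nonsing_inv_det Ω hinv).ne_zero
  obtain ⟨a₁, a₂, b₁, b₂, h₁₂, h₃₄, h₁₃, h₁₄, h₂₃, h₂₄⟩ :=
    (isAlt_toLinearMap₂' hW).exists_orthogonal_hyperbolic_pairs hsep
      (by rw [Module.finrank_fin_fun]; omega)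
  exact eq_zero_of_forall_relation_of_hyperbolic_pairs Ω⁻¹ hW h₁₂ h₃₄ h₁₃ h₁₄ h₂₃ h₂₄ h
end
end

section
/- If Q_{ijk} is totally skew-symmetric in all three indices, then r(Q) = Q_{ijk}Q_{pql}ω^{ij}ω^{kp}ω^{ql} = 0. -/
set_option synthInstance.maxHeartbeats 1000000
set_option maxHeartbeats 1000000

open Matrix

noncomputable section

private lemma sum_prod6 {m : ℕ} (F : Fin m → Fin m → Fin m → Fin m → Fin m → Fin m → ℝ) :
    (∑ i, ∑ j, ∑ k, ∑ p, ∑ q, ∑ l, F i j k p q l)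
      = ∑ x : Fin m × Fin m × Fin m × Fin m × Fin m × Fin m,
          F x.1 x.2.1 x.2.2.1 x.2.2.2.1 x.2.2.2.2.1 x.2.2.2.2.2 := by
  simp [Fintype.sum_prod_type]

/-- If `Q` is totally skew-symmetric in all three indices, then
`r(Q) = Q_{ijk}Q_{pql}ω^{ij}ω^{kp}ω^{ql} = 0`. -/
theorem stmt17 (n : ℕ) (Ω : Matrix (Fin (2 * n)) (Fin (2 * n)) ℝ)
    (hskew : Ωᵀ = -Ω) (hinv : IsUnit Ω.det)
    (Q : Fin (2 * n) → Fin (2 * n) → Fin (2 * n) → ℝ)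
    (h12 : ∀ i j k, Q i j k = -Q j i k)
    (h23 : ∀ i j k, Q i j k = -Q i k j) :
    r₂ Ω⁻¹ Q = 0 := by
  have hWt : (Ω⁻¹)ᵀ = -Ω⁻¹ := by
    rw [Matrix.transpose_nonsing_inv]
    have : Ωᵀ * (-Ω⁻¹) = 1 := by
      rw [hskew]
      simp [Matrix.mul_nonsing_inv Ω hinv]
    rw [Matrix.inv_eq_right_inv this]
  have hW : ∀ i j, Ω⁻¹ i j = -Ω⁻¹ j i := by
    intro i j
    have := congrFun (congrFun hWt j) i
    simpa using this
  have hcyc : ∀ i j k, Q i j k = Q j k i := by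
    intro i j k
    rw [h12 i j k, h23 j i k]
    ring
  -- the involution (i,j,k,p,q,l) ↦ (q,l,p,k,i,j)
  let β := Fin (2 * n) × Fin (2 * n) × Fin (2 * n) × Fin (2 * n) × Fin (2 * n) × Fin (2 * n)
  let e : β ≃ β :=
    { toFun := fun x => (x.2.2.2.2.1, x.2.2.2.2.2, x.2.2.2.1, x.2.2.1, x.1, x.2.1)
      invFun := fun x => (x.2.2.2.2.1, x.2.2.2.2.2, x.2.2.2.1, x.2.2.1, x.1, x.2.1)
      left_inv := fun x => rfl
      right_inv := fun x => rfl }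
  let G : β → ℝ := fun x =>
    Q x.1 x.2.1 x.2.2.1 * Q x.2.2.2.1 x.2.2.2.2.1 x.2.2.2.2.2 *
      Ω⁻¹ x.1 x.2.1 * Ω⁻¹ x.2.2.1 x.2.2.2.1 * Ω⁻¹ x.2.2.2.2.1 x.2.2.2.2.2
  have hr : r₂ Ω⁻¹ Q = ∑ x, G x := by
    unfold r₂
    exact sum_prod6 _
  have hGe : ∀ x, G (e x) = -G x := by
    rintro ⟨i, j, k, p, q, l⟩
    show Q q l p * Q k i j * Ω⁻¹ q l * Ω⁻¹ p k * Ω⁻¹ i j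
        = -(Q i j k * Q p q l * Ω⁻¹ i j * Ω⁻¹ k p * Ω⁻¹ q l)
    rw [show Q q l p = Q p q l from (hcyc p q l).symm,
        hcyc k i j,
        hW p k]
    ring
  have hself : (∑ x, G x) = -∑ x, G x := by
    calc (∑ x, G x) = ∑ x, G (e x) := (Equiv.sum_comp e G).symm
    _ = ∑ x, -G x := by simp only [hGe]
    _ = -∑ x, G x := by rw [Finset.sum_neg_distrib]
  rw [hr]
  linarith [hself]
end
end

section
/- Let A, W ∈ V be fixed vectors and define the torsion-like tensor T(X,Y) = ω(X,Y)A + ω(X,W)Y − ω(Y,W)X on a symplectic vector space (V,ω) of dimension 2n. Then with T_{ijk} = ω(T(e_i,e_j),e_k) one has T_{ijk}T_{pql}ω^{ij}ω^{kp}ω^{ql} = 2(2n² − n − 1)ω(A,W). -/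
open Matrix

set_option synthInstance.maxHeartbeats 1000000
set_option maxHeartbeats 1000000

noncomputable section

/-- The symplectic form on `V = ℝ^{2n}` with matrix `Ω` in the standard
basis: `ω(x,y) = ∑ᵢⱼ xᵢ Ωᵢⱼ yⱼ`. -/
def omegaForm {m : ℕ} (Ω : Matrix (Fin m) (Fin m) ℝ) (x y : Fin m → ℝ) : ℝ :=
  ∑ i, ∑ j, x i * Ω i j * y j

section AuxKey

theorem keyS_split3 {m : ℕ} (f g h : Fin m → ℝ) :
    ∑ i, (f i + g i - h i) = (∑ i, f i) + (∑ i, g i) - (∑ i, h i) := by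
  rw [Finset.sum_sub_distrib, Finset.sum_add_distrib]

theorem keyS_comb {m : ℕ} (Ω : Matrix (Fin m) (Fin m) ℝ) (c d e : ℝ)
    (A v w : Fin m → ℝ) (k : Fin m) :
    ∑ a, (c • A + d • v - e • w) a * Ω a k
      = c * (∑ a, A a * Ω a k) + d * (∑ a, v a * Ω a k)
        - e * (∑ a, w a * Ω a k) := by
  rw [Finset.mul_sum, Finset.mul_sum, Finset.mul_sum, ← keyS_split3]
  refine Finset.sum_congr rfl fun b _ => ?_
  simp only [Pi.add_apply, Pi.sub_apply, Pi.smul_apply, smul_eq_mul]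
  ring

theorem keyS {m : ℕ} (Ω B : Matrix (Fin m) (Fin m) ℝ)
    (hΩB : Ω * B = 1) (hBΩ : B * Ω = 1)
    (hΩs : ∀ i j, Ω j i = -Ω i j) (hBs : ∀ i j, B j i = -B i j)
    (A W : Fin m → ℝ)
    (Tc : Fin m → Fin m → Fin m → ℝ)
    (hTc' : ∀ i j k, Tc i j k =
      Ω i j * (∑ r, A r * Ω r k) + (∑ r, Ω i r * W r) * Ω j k
        - (∑ r, Ω j r * W r) * Ω i k) :
    ∑ i, ∑ j, ∑ k, ∑ p, ∑ q, ∑ l,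
        Tc i j k * Tc p q l * B i j * B k p * B q l
      = ((m : ℝ) ^ 2 - m - 2) * ∑ i, ∑ j, A i * Ω i j * W j := by
  obtain ⟨a, ha⟩ : ∃ a : Fin m → ℝ, a = fun k => ∑ r, A r * Ω r k := ⟨_, rfl⟩
  obtain ⟨u, hu⟩ : ∃ u : Fin m → ℝ, u = fun i => ∑ r, Ω i r * W r := ⟨_, rfl⟩
  obtain ⟨s, hs⟩ : ∃ s : ℝ, s = ∑ i, ∑ j, A i * Ω i j * W j := ⟨_, rfl⟩
  have hTc2 : ∀ i j k, Tc i j k = Ω i j * a k + u i * Ω j k - u j * Ω i k := by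
    intro i j k
    rw [hTc' i j k]
    simp only [ha, hu]
  -- entrywise delta contractions
  have L1 : ∀ i k, ∑ j, Ω i j * B j k = if i = k then 1 else 0 := by
    intro i k
    have := congrFun (congrFun hΩB i) k
    simpa [Matrix.mul_apply, Matrix.one_apply] using this
  have L2 : ∀ i k, ∑ j, B i j * Ω j k = if i = k then 1 else 0 := by
    intro i k
    have := congrFun (congrFun hBΩ i) k
    simpa [Matrix.mul_apply, Matrix.one_apply] using this
  -- trace
  have L3 : ∑ i, ∑ j, Ω i j * B i j = -(m : ℝ) := by
    have step : ∀ i : Fin m, ∑ j, Ω i j * B i j = -1 := by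
      intro i
      have h1 : ∀ j, Ω i j * B i j = -(Ω i j * B j i) := fun j => by
        rw [hBs j i]; ring
      calc ∑ j, Ω i j * B i j = ∑ j, -(Ω i j * B j i) :=
            Finset.sum_congr rfl fun j _ => h1 j
        _ = -(∑ j, Ω i j * B j i) := by rw [Finset.sum_neg_distrib]
        _ = -1 := by rw [L1 i i]; simp
    rw [Finset.sum_congr rfl fun i _ => step i]
    simp [Finset.card_univ]
  -- vector contractions
  have L4 : ∀ k, ∑ p, B k p * u p = W k := by
    intro k
    have h1 : ∀ r, ∑ p, B k p * (Ω p r * W r) = (if k = r then 1 else 0) * W r := by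
      intro r
      calc ∑ p, B k p * (Ω p r * W r) = (∑ p, B k p * Ω p r) * W r := by
            rw [Finset.sum_mul]; exact Finset.sum_congr rfl fun p _ => by ring
        _ = (if k = r then 1 else 0) * W r := by rw [L2 k r]
    calc ∑ p, B k p * u p = ∑ p, ∑ r, B k p * (Ω p r * W r) := by
          simp [hu, Finset.mul_sum]
      _ = ∑ r, ∑ p, B k p * (Ω p r * W r) := Finset.sum_comm
      _ = ∑ r, (if k = r then 1 else 0) * W r := Finset.sum_congr rfl fun r _ => h1 r
      _ = W k := by simp
  have L5 : ∀ l, ∑ q, u q * B q l = -W l := by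
    intro l
    calc ∑ q, u q * B q l = ∑ q, -(B l q * u q) := by
          refine Finset.sum_congr rfl fun q _ => ?_
          rw [hBs q l]; ring
      _ = -(∑ q, B l q * u q) := by rw [Finset.sum_neg_distrib]
      _ = -W l := by rw [L4 l]
  have L6 : ∀ q, ∑ l, B q l * a l = -A q := by
    intro q
    have h1 : ∀ r, ∑ l, B q l * (A r * Ω r l) = -(A r * (if q = r then 1 else 0)) := by
      intro r
      calc ∑ l, B q l * (A r * Ω r l) = ∑ l, -(A r * (B q l * Ω l r)) := by
            refine Finset.sum_congr rfl fun l _ => ?_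
            rw [hΩs l r]; ring
        _ = -(A r * ∑ l, B q l * Ω l r) := by
            rw [Finset.sum_neg_distrib, Finset.mul_sum]
        _ = -(A r * (if q = r then 1 else 0)) := by rw [L2 q r]
    calc ∑ l, B q l * a l = ∑ l, ∑ r, B q l * (A r * Ω r l) := by
          simp [ha, Finset.mul_sum, mul_assoc]
      _ = ∑ r, ∑ l, B q l * (A r * Ω r l) := Finset.sum_comm
      _ = ∑ r, -(A r * (if q = r then 1 else 0)) := Finset.sum_congr rfl fun r _ => h1 r
      _ = -A q := by simp
  have L8 : ∑ k, a k * A k = 0 := by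
    have h0 : ∑ k, a k * A k = ∑ k, ∑ r, A r * Ω r k * A k := by
      simp [ha, Finset.sum_mul]
    have h1 : ∑ k, a k * A k = -(∑ k, a k * A k) := by
      calc ∑ k, a k * A k = ∑ k, ∑ r, A r * Ω r k * A k := h0
        _ = ∑ r, ∑ k, A r * Ω r k * A k := Finset.sum_comm
        _ = ∑ r, ∑ k, -(A k * Ω k r * A r) := by
            refine Finset.sum_congr rfl fun r _ => Finset.sum_congr rfl fun k _ => ?_
            rw [hΩs r k]; ring
        _ = -(∑ r, ∑ k, A k * Ω k r * A r) := by
            simp [Finset.sum_neg_distrib]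
        _ = -(∑ k, a k * A k) := by
            rw [h0]
    linarith
  have L9 : ∑ q, A q * u q = s := by
    simp [hu, hs, Finset.mul_sum, mul_assoc]
  have L10 : ∑ l, a l * W l = s := by
    calc ∑ l, a l * W l = ∑ l, ∑ r, A r * Ω r l * W l := by
          simp [ha, Finset.sum_mul]
      _ = ∑ r, ∑ l, A r * Ω r l * W l := Finset.sum_comm
      _ = s := hs.symm
  have L11 : ∀ j, ∑ k, Ω j k * A k = -a j := by
    intro j
    calc ∑ k, Ω j k * A k = ∑ k, -(A k * Ω k j) := by
          refine Finset.sum_congr rfl fun k _ => ?_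
          rw [hΩs j k]; ring
      _ = -(∑ k, A k * Ω k j) := by rw [Finset.sum_neg_distrib]
      _ = -a j := by simp only [ha]
  have L12 : ∀ j, ∑ k, Ω j k * W k = u j := fun j => by simp only [hu]
  -- Stage F
  have hF : ∀ p, ∑ q, ∑ l, Tc p q l * B q l = a p + (1 - (m : ℝ)) * u p := by
    intro p
    have expand : ∀ q l, Tc p q l * B q l =
        Ω p q * (B q l * a l) + u p * (Ω q l * B q l) - Ω p l * (u q * B q l) := by
      intro q l; rw [hTc2]; ring
    have t1 : ∑ q, ∑ l, Ω p q * (B q l * a l) = a p := by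
      calc ∑ q, ∑ l, Ω p q * (B q l * a l)
          = ∑ q, Ω p q * ∑ l, B q l * a l := by
            refine Finset.sum_congr rfl fun q _ => ?_
            rw [Finset.mul_sum]
        _ = ∑ q, -(Ω p q * A q) := by
            refine Finset.sum_congr rfl fun q _ => by rw [L6 q]; ring
        _ = -∑ q, Ω p q * A q := by rw [Finset.sum_neg_distrib]
        _ = -(-a p) := by rw [L11 p]
        _ = a p := neg_neg _
    have t2 : ∑ q, ∑ l, u p * (Ω q l * B q l) = -((m : ℝ) * u p) := by
      calc ∑ q, ∑ l, u p * (Ω q l * B q l)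
          = u p * ∑ q, ∑ l, Ω q l * B q l := by
            rw [Finset.mul_sum]
            exact Finset.sum_congr rfl fun q _ => by rw [Finset.mul_sum]
        _ = u p * (-(m : ℝ)) := by rw [L3]
        _ = -((m : ℝ) * u p) := by ring
    have t3 : ∑ q, ∑ l, Ω p l * (u q * B q l) = -u p := by
      calc ∑ q, ∑ l, Ω p l * (u q * B q l)
          = ∑ l, ∑ q, Ω p l * (u q * B q l) := Finset.sum_comm
        _ = ∑ l, Ω p l * ∑ q, u q * B q l := by
            refine Finset.sum_congr rfl fun l _ => ?_
            rw [Finset.mul_sum]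
        _ = ∑ l, -(Ω p l * W l) := by
            refine Finset.sum_congr rfl fun l _ => by rw [L5 l]; ring
        _ = -∑ l, Ω p l * W l := by rw [Finset.sum_neg_distrib]
        _ = -u p := by rw [L12 p]
    calc ∑ q, ∑ l, Tc p q l * B q l
        = ∑ q, ∑ l, (Ω p q * (B q l * a l) + u p * (Ω q l * B q l)
            - Ω p l * (u q * B q l)) :=
          Finset.sum_congr rfl fun q _ => Finset.sum_congr rfl fun l _ => expand q l
      _ = ∑ q, ((∑ l, Ω p q * (B q l * a l)) + (∑ l, u p * (Ω q l * B q l))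
            - ∑ l, Ω p l * (u q * B q l)) :=
          Finset.sum_congr rfl fun q _ => keyS_split3 _ _ _
      _ = (∑ q, ∑ l, Ω p q * (B q l * a l)) + (∑ q, ∑ l, u p * (Ω q l * B q l))
            - ∑ q, ∑ l, Ω p l * (u q * B q l) := keyS_split3 _ _ _
      _ = a p + (1 - (m : ℝ)) * u p := by rw [t1, t2, t3]; ring
  -- Stage G
  have hG : ∀ k, ∑ p, B k p * (a p + (1 - (m : ℝ)) * u p)
      = -A k + (1 - (m : ℝ)) * W k := by
    intro k
    calc ∑ p, B k p * (a p + (1 - (m : ℝ)) * u p)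
        = (∑ p, B k p * a p) + (1 - (m : ℝ)) * ∑ p, B k p * u p := by
          rw [Finset.mul_sum, ← Finset.sum_add_distrib]
          exact Finset.sum_congr rfl fun p _ => by ring
      _ = -A k + (1 - (m : ℝ)) * W k := by rw [L6 k, L4 k]
  -- Stage H
  have hH : ∀ i j, ∑ k, Tc i j k * (-A k + (1 - (m : ℝ)) * W k)
      = (1 - (m : ℝ)) * s * Ω i j + u i * a j - u j * a i := by
    intro i j
    have e1 : ∑ k, a k * (-A k + (1 - (m : ℝ)) * W k) = (1 - (m : ℝ)) * s := by
      calc ∑ k, a k * (-A k + (1 - (m : ℝ)) * W k)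
          = ∑ k, (-(a k * A k) + (1 - (m : ℝ)) * (a k * W k)) :=
            Finset.sum_congr rfl fun k _ => by ring
        _ = -(∑ k, a k * A k) + (1 - (m : ℝ)) * ∑ k, a k * W k := by
            rw [Finset.sum_add_distrib, Finset.sum_neg_distrib, Finset.mul_sum]
        _ = (1 - (m : ℝ)) * s := by rw [L8, L10]; ring
    have e2 : ∀ w : Fin m, ∑ k, Ω w k * (-A k + (1 - (m : ℝ)) * W k)
        = a w + (1 - (m : ℝ)) * u w := by
      intro w
      calc ∑ k, Ω w k * (-A k + (1 - (m : ℝ)) * W k)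
          = ∑ k, (-(Ω w k * A k) + (1 - (m : ℝ)) * (Ω w k * W k)) :=
            Finset.sum_congr rfl fun k _ => by ring
        _ = -(∑ k, Ω w k * A k) + (1 - (m : ℝ)) * ∑ k, Ω w k * W k := by
            rw [Finset.sum_add_distrib, Finset.sum_neg_distrib, Finset.mul_sum]
        _ = a w + (1 - (m : ℝ)) * u w := by rw [L11 w, L12 w]; ring
    calc ∑ k, Tc i j k * (-A k + (1 - (m : ℝ)) * W k)
        = ∑ k, (Ω i j * (a k * (-A k + (1 - (m : ℝ)) * W k))
            + u i * (Ω j k * (-A k + (1 - (m : ℝ)) * W k))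
            - u j * (Ω i k * (-A k + (1 - (m : ℝ)) * W k))) :=
          Finset.sum_congr rfl fun k _ => by rw [hTc2]; ring
      _ = (∑ k, Ω i j * (a k * (-A k + (1 - (m : ℝ)) * W k)))
            + (∑ k, u i * (Ω j k * (-A k + (1 - (m : ℝ)) * W k)))
            - ∑ k, u j * (Ω i k * (-A k + (1 - (m : ℝ)) * W k)) := keyS_split3 _ _ _
      _ = Ω i j * ∑ k, (a k * (-A k + (1 - (m : ℝ)) * W k))
            + u i * ∑ k, (Ω j k * (-A k + (1 - (m : ℝ)) * W k))
            - u j * ∑ k, (Ω i k * (-A k + (1 - (m : ℝ)) * W k)) := by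
          rw [Finset.mul_sum, Finset.mul_sum, Finset.mul_sum]
      _ = Ω i j * ((1 - (m : ℝ)) * s) + u i * (a j + (1 - (m : ℝ)) * u j)
            - u j * (a i + (1 - (m : ℝ)) * u i) := by
          rw [e1, e2 j, e2 i]
      _ = (1 - (m : ℝ)) * s * Ω i j + u i * a j - u j * a i := by ring
  -- per-row final contraction
  have hrow : ∀ i, ∑ j, B i j * ((1 - (m : ℝ)) * s * Ω i j + u i * a j - u j * a i)
      = (1 - (m : ℝ)) * s * (∑ j, Ω i j * B i j) + u i * (-A i) - a i * W i := by
    intro i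
    calc ∑ j, B i j * ((1 - (m : ℝ)) * s * Ω i j + u i * a j - u j * a i)
        = ∑ j, ((1 - (m : ℝ)) * s * (Ω i j * B i j) + u i * (B i j * a j)
            - a i * (B i j * u j)) :=
          Finset.sum_congr rfl fun j _ => by ring
      _ = (∑ j, (1 - (m : ℝ)) * s * (Ω i j * B i j)) + (∑ j, u i * (B i j * a j))
            - ∑ j, a i * (B i j * u j) := keyS_split3 _ _ _
      _ = (1 - (m : ℝ)) * s * (∑ j, Ω i j * B i j) + u i * (∑ j, B i j * a j)
            - a i * (∑ j, B i j * u j) := by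
          rw [Finset.mul_sum, Finset.mul_sum, Finset.mul_sum]
      _ = (1 - (m : ℝ)) * s * (∑ j, Ω i j * B i j) + u i * (-A i) - a i * W i := by
          rw [L6 i, L4 i]
  -- main chain
  calc ∑ i, ∑ j, ∑ k, ∑ p, ∑ q, ∑ l, Tc i j k * Tc p q l * B i j * B k p * B q l
      = ∑ i, ∑ j, ∑ k, ∑ p,
          (Tc i j k * B i j) * (B k p * (a p + (1 - (m : ℝ)) * u p)) := by
        refine Finset.sum_congr rfl fun i _ => Finset.sum_congr rfl fun j _ =>
          Finset.sum_congr rfl fun k _ => Finset.sum_congr rfl fun p _ => ?_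
        calc ∑ q, ∑ l, Tc i j k * Tc p q l * B i j * B k p * B q l
            = (Tc i j k * B i j * B k p) * ∑ q, ∑ l, Tc p q l * B q l := by
              rw [Finset.mul_sum]
              refine Finset.sum_congr rfl fun q _ => ?_
              rw [Finset.mul_sum]
              exact Finset.sum_congr rfl fun l _ => by ring
          _ = (Tc i j k * B i j) * (B k p * (a p + (1 - (m : ℝ)) * u p)) := by
              rw [hF p]; ring
    _ = ∑ i, ∑ j, ∑ k, B i j * (Tc i j k * (-A k + (1 - (m : ℝ)) * W k)) := by
        refine Finset.sum_congr rfl fun i _ => Finset.sum_congr rfl fun j _ =>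
          Finset.sum_congr rfl fun k _ => ?_
        calc ∑ p, (Tc i j k * B i j) * (B k p * (a p + (1 - (m : ℝ)) * u p))
            = (Tc i j k * B i j) * ∑ p, B k p * (a p + (1 - (m : ℝ)) * u p) := by
              rw [Finset.mul_sum]
          _ = B i j * (Tc i j k * (-A k + (1 - (m : ℝ)) * W k)) := by
              rw [hG k]; ring
    _ = ∑ i, ∑ j, B i j * ((1 - (m : ℝ)) * s * Ω i j + u i * a j - u j * a i) := by
        refine Finset.sum_congr rfl fun i _ => Finset.sum_congr rfl fun j _ => ?_
        rw [← Finset.mul_sum, hH i j]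
    _ = ∑ i, ((1 - (m : ℝ)) * s * (∑ j, Ω i j * B i j) + u i * (-A i) - a i * W i) :=
        Finset.sum_congr rfl fun i _ => hrow i
    _ = (∑ i, (1 - (m : ℝ)) * s * (∑ j, Ω i j * B i j)) + (∑ i, u i * (-A i))
          - ∑ i, a i * W i := keyS_split3 _ _ _
    _ = (1 - (m : ℝ)) * s * (-(m : ℝ)) + (-s) - s := by
        have f1 : ∑ i, (1 - (m : ℝ)) * s * (∑ j, Ω i j * B i j)
            = (1 - (m : ℝ)) * s * (-(m : ℝ)) := by
          rw [← Finset.mul_sum, L3]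
        have f2 : ∑ i, u i * (-A i) = -s := by
          rw [← L9, ← Finset.sum_neg_distrib]
          exact Finset.sum_congr rfl fun i _ => by ring
        rw [f1, f2, L10]
    _ = ((m : ℝ) ^ 2 - m - 2) * s := by ring
    _ = ((m : ℝ) ^ 2 - m - 2) * ∑ i, ∑ j, A i * Ω i j * W j := by rw [hs]

end AuxKey

/-- For the torsion-like tensor `T(X,Y) = ω(X,Y)A + ω(X,W)Y − ω(Y,W)X` built
from fixed vectors `A, W`, the quadratic invariant equals
`2(2n² − n − 1)ω(A,W)`. -/
theorem stmt19 (n : ℕ) (Ω : Matrix (Fin (2 * n)) (Fin (2 * n)) ℝ)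
    (hskew : Ωᵀ = -Ω) (hinv : IsUnit Ω.det)
    (A W : Fin (2 * n) → ℝ)
    (T : (Fin (2 * n) → ℝ) → (Fin (2 * n) → ℝ) → Fin (2 * n) → ℝ)
    (hT : ∀ X Y, T X Y =
      omegaForm Ω X Y • A + omegaForm Ω X W • Y - omegaForm Ω Y W • X)
    (Tc : Fin (2 * n) → Fin (2 * n) → Fin (2 * n) → ℝ)
    (hTc : ∀ i j k,
      Tc i j k = omegaForm Ω (T (Pi.single i 1) (Pi.single j 1)) (Pi.single k 1)) :
    ∑ i, ∑ j, ∑ k, ∑ p, ∑ q, ∑ l,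
        Tc i j k * Tc p q l * Ω⁻¹ i j * Ω⁻¹ k p * Ω⁻¹ q l =
      2 * (2 * (n : ℝ) ^ 2 - n - 1) * omegaForm Ω A W := by
  have hΩB : Ω * Ω⁻¹ = 1 := Matrix.mul_nonsing_inv Ω hinv
  have hBΩ : Ω⁻¹ * Ω = 1 := Matrix.nonsing_inv_mul Ω hinv
  have hΩs : ∀ i j, Ω j i = -Ω i j := by
    intro i j
    have := congrFun (congrFun hskew i) j
    simpa [Matrix.transpose_apply] using this
  have hBs : ∀ i j, Ω⁻¹ j i = -Ω⁻¹ i j := by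
    have hT1 : (Ω⁻¹)ᵀ = -Ω⁻¹ := by
      rw [Matrix.transpose_nonsing_inv, hskew]
      have : (-Ω) * (-Ω⁻¹) = 1 := by
        rw [Matrix.neg_mul, Matrix.mul_neg, neg_neg, hΩB]
      exact Matrix.inv_eq_right_inv this
    intro i j
    have := congrFun (congrFun hT1 i) j
    simpa [Matrix.transpose_apply] using this
  -- basis evaluations of omegaForm
  have hsl : ∀ (i : Fin (2 * n)) (y : Fin (2 * n) → ℝ),
      omegaForm Ω (Pi.single i 1) y = ∑ b, Ω i b * y b := by
    intro i y
    simp [omegaForm, Pi.single_apply, ite_mul]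
  have hsr : ∀ (x : Fin (2 * n) → ℝ) (k : Fin (2 * n)),
      omegaForm Ω x (Pi.single k 1) = ∑ a, x a * Ω a k := by
    intro x k
    simp [omegaForm, Pi.single_apply, mul_ite]
  have hee : ∀ i j : Fin (2 * n),
      omegaForm Ω (Pi.single i 1) (Pi.single j 1) = Ω i j := by
    intro i j
    rw [hsl]
    simp [Pi.single_apply, mul_ite]
  have hTc' : ∀ i j k, Tc i j k =
      Ω i j * (∑ r, A r * Ω r k) + (∑ r, Ω i r * W r) * Ω j k
        - (∑ r, Ω j r * W r) * Ω i k := by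
    intro i j k
    have hsingle : ∀ (w k : Fin (2 * n)),
        ∑ a, (Pi.single w 1 : Fin (2 * n) → ℝ) a * Ω a k = Ω w k := by
      intro w k
      simp [Pi.single_apply, ite_mul]
    rw [hTc, hT, hsr, keyS_comb, hee, hsl i W, hsl j W, hsingle j k, hsingle i k]
  have key := keyS Ω Ω⁻¹ hΩB hBΩ hΩs hBs A W Tc hTc'
  rw [key]
  have hω : omegaForm Ω A W = ∑ i, ∑ j, A i * Ω i j * W j := rfl
  rw [hω]
  push_cast
  ring
end
end
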